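/- arXiv:math/0002103 — 4 statements merged into one kernel-verified Lean document; each statement's English description precedes it below -/
import Mathlib

section
/- Let (b_n)_{n≥0} be a sequence of nonnegative real numbers such that the power series f(x) = Σ_{n=0}^∞ b_n x^n converges for |x| < 1, and let α > 0. If log b_n ~ 2√(αn) as n → ∞, then log f(x) ~ α/(1−x) as x → 1⁻. -/
/-!
Substitute `x = exp (-t)`, so that `f x = ∑ bₙ e^{-nt}` and `t → 0⁺`. If `log bₙ ≥ 2√(βn)` for
large `n`, the single term with `n = ⌈β/t²⌉`, where `2√(βn) - nt` is maximal, already gives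
`log f ≥ β/t - t`. If `log bₙ ≤ 2√(βn)` and `β < γ`, then `2√(βn) ≤ γ/t + (β/γ) t n` dominates
the series by `e^{γ/t}` times a geometric series of ratio `e^{-(1-β/γ)t}`, whose sum is `O(1/t)`, so
`t log f ≤ γ + o(1)`. Letting `β` tend to `α` from both sides gives `t log f(e^{-t}) → α`, and
`-log x ~ 1 - x` as `x → 1` turns this into the claim.
-/

open Filter Asymptotics Real Topology

lemma two_mul_sqrt_mul_eq_sqrt_div_mul {α β : ℝ} (hα : 0 < α) (n : ℕ) :
    2 * √(β * n) = √(β / α) * (2 * √(α * n)) := by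
  rw [mul_left_comm, ← sqrt_mul' _ (by positivity), div_mul_eq_mul_div, mul_div_assoc,
    mul_div_cancel_left₀ _ hα.ne']

namespace Asymptotics.IsEquivalent

variable {ι : Type*} {l : Filter ι} {u v : ι → ℝ}

lemma eventually_mul_le_of_lt_one (huv : u ~[l] v) (hv : ∀ᶠ i in l, 0 ≤ v i) {c : ℝ}
    (hc : c < 1) : ∀ᶠ i in l, c * v i ≤ u i := by
  filter_upwards [huv.isLittleO.def (sub_pos.2 hc), hv] with i hi hvi
  rw [Pi.sub_apply, norm_eq_abs, norm_eq_abs, abs_of_nonneg hvi] at hi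
  linarith [(abs_le.1 hi).1]

lemma eventually_le_mul_of_one_lt (huv : u ~[l] v) (hv : ∀ᶠ i in l, 0 ≤ v i) {c : ℝ}
    (hc : 1 < c) : ∀ᶠ i in l, u i ≤ c * v i := by
  filter_upwards [huv.isLittleO.def (sub_pos.2 hc), hv] with i hi hvi
  rw [Pi.sub_apply, norm_eq_abs, norm_eq_abs, abs_of_nonneg hvi] at hi
  linarith [(abs_le.1 hi).2]

variable {w : ℕ → ℝ} {α β : ℝ}

lemma eventually_two_sqrt_le
    (h : w ~[atTop] fun n : ℕ => 2 * √(α * n)) (hα : 0 < α) (hβα : β < α) :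
    ∀ᶠ n : ℕ in atTop, 2 * √(β * n) ≤ w n := by
  have hc : √(β / α) < 1 := by
    rw [sqrt_lt' one_pos, one_pow, div_lt_one hα]; exact hβα
  filter_upwards [h.eventually_mul_le_of_lt_one (.of_forall fun n => by positivity) hc]
    with n hn
  rwa [two_mul_sqrt_mul_eq_sqrt_div_mul hα]

lemma eventually_le_two_sqrt
    (h : w ~[atTop] fun n : ℕ => 2 * √(α * n)) (hα : 0 < α) (hαβ : α < β) :
    ∀ᶠ n : ℕ in atTop, w n ≤ 2 * √(β * n) := by
  have hc : 1 < √(β / α) := by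
    rw [lt_sqrt zero_le_one, one_pow, one_lt_div hα]; exact hαβ
  filter_upwards [h.eventually_le_mul_of_one_lt (.of_forall fun n => by positivity) hc]
    with n hn
  rwa [two_mul_sqrt_mul_eq_sqrt_div_mul hα]

end Asymptotics.IsEquivalent

lemma two_mul_le_div_add_mul_sq {u t γ : ℝ} (ht : 0 < t) (hγ : 0 < γ) :
    2 * u ≤ γ / t + t * u ^ 2 / γ := by
  rw [div_add_div _ _ ht.ne' hγ.ne', le_div_iff₀ (by positivity)]
  nlinarith [sq_nonneg (γ - t * u)]

lemma mul_exp_neg_pow_le_of_le_mul_exp_two_sqrt {B M β γ t : ℝ} {n : ℕ} (hM : 0 ≤ M)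
    (hβ : 0 ≤ β) (hγ : 0 < γ) (ht : 0 < t) (hB : B ≤ M * exp (2 * √(β * n))) :
    B * exp (-t) ^ n ≤ M * exp (γ / t) * exp (-((1 - β / γ) * t)) ^ n := by
  have hamgm := two_mul_le_div_add_mul_sq (u := √(β * n)) ht hγ
  rw [sq_sqrt (by positivity)] at hamgm
  calc B * exp (-t) ^ n ≤ M * exp (2 * √(β * n)) * exp (-t) ^ n := by gcongr
    _ = M * exp (2 * √(β * n) - t * n) := by
        rw [← exp_nat_mul, mul_assoc, ← exp_add]; ring_nf
    _ ≤ M * exp (γ / t - (1 - β / γ) * t * n) := by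
        refine mul_le_mul_of_nonneg_left (exp_le_exp.2 ?_) hM
        have : t * (β * n) / γ = β / γ * t * n := by field_simp
        linarith
    _ = M * exp (γ / t) * exp (-((1 - β / γ) * t)) ^ n := by
        rw [← exp_nat_mul, mul_assoc M, ← exp_add]; ring_nf

lemma tsum_exp_neg_pow_le {s : ℝ} (hs : 0 < s) : ∑' n : ℕ, exp (-s) ^ n ≤ exp s / s := by
  rw [tsum_geometric_of_lt_one (exp_pos _).le (exp_lt_one_iff.2 (neg_lt_zero.2 hs)), ← inv_div]
  refine inv_anti₀ (by positivity) ?_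
  rw [div_le_iff₀ (exp_pos s), sub_mul, ← exp_add, neg_add_cancel, exp_zero, one_mul]
  linarith [add_one_le_exp s]

lemma exists_le_mul_exp_of_eventually_log_le {b g : ℕ → ℝ} (hg : ∀ n, 0 ≤ g n)
    (h : ∀ᶠ n in atTop, log (b n) ≤ g n) : ∃ M > 0, ∀ n, b n ≤ M * exp (g n) := by
  obtain ⟨N, hN⟩ := eventually_atTop.1 h
  have hS : 0 ≤ ∑ n ∈ Finset.range N, |b n| := Finset.sum_nonneg fun n _ => abs_nonneg _
  refine ⟨1 + ∑ n ∈ Finset.range N, |b n|, by positivity, fun n => ?_⟩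
  rcases lt_or_ge n N with hn | hn
  · have hbn : b n ≤ ∑ n ∈ Finset.range N, |b n| := (le_abs_self _).trans <|
      Finset.single_le_sum (fun i _ => abs_nonneg (b i)) (Finset.mem_range.2 hn)
    nlinarith [one_le_exp (hg n)]
  · calc b n ≤ exp (log (b n)) := le_exp_log _
      _ ≤ exp (g n) := exp_le_exp.2 (hN n hn)
      _ ≤ _ := le_mul_of_one_le_left (exp_pos _).le (by linarith)

lemma tendsto_mul_log_mul_exp_div {M κ : ℝ} (hM : 0 < M) (hκ : 0 < κ) :
    Tendsto (fun t => t * log (M * exp (κ * t) / (κ * t))) (𝓝[>] 0) (𝓝 0) := by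
  have hcont : Continuous fun t => t * log M + κ * t ^ 2 - κ⁻¹ * ((κ * t) * log (κ * t)) := by
    have := continuous_mul_log.comp (continuous_const_mul κ)
    fun_prop
  refine ((hcont.tendsto' 0 0 (by simp)).mono_left nhdsWithin_le_nhds).congr' ?_
  filter_upwards [self_mem_nhdsWithin] with t (ht : 0 < t)
  rw [log_div (by positivity) (by positivity), log_mul hM.ne' (exp_pos _).ne', log_exp]
  field_simp

lemma tendsto_neg_log_nhdsLT_one : Tendsto (fun x => -log x) (𝓝[<] 1) (𝓝[>] 0) := by
  refine tendsto_nhdsWithin_iff.2 ⟨?_, ?_⟩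
  · have h : Tendsto (fun x => -log x) (𝓝 1) (𝓝 (-log 1)) := (continuousAt_log one_ne_zero).neg
    simpa using h.mono_left nhdsWithin_le_nhds
  · filter_upwards [Ioo_mem_nhdsLT zero_lt_one] with x hx
    exact neg_pos.2 (log_neg hx.1 hx.2)

lemma isEquivalent_neg_log_one_sub : (fun x => -log x) ~[𝓝 1] fun x => 1 - x := by
  have h := (hasDerivAt_log one_ne_zero).isLittleO
  simp only [log_one, sub_zero, inv_one, smul_eq_mul, mul_one] at h
  simpa [neg_sub] using (show log ~[𝓝 1] fun x => x - 1 from h).neg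

section PowerSeries

variable {b : ℕ → ℝ} {α β γ : ℝ}

lemma eventually_sub_sq_le_mul_log_tsum (hb : ∀ n, 0 ≤ b n)
    (hsum : ∀ t > 0, Summable fun n => b n * exp (-t) ^ n) (hβ : 0 < β)
    (hlow : ∀ᶠ n : ℕ in atTop, 2 * √(β * n) ≤ log (b n)) :
    ∀ᶠ t in 𝓝[>] 0, β - t ^ 2 ≤ t * log (∑' n, b n * exp (-t) ^ n) := by
  obtain ⟨N, hN⟩ := eventually_atTop.1 hlow
  have hm : Tendsto (fun t : ℝ => ⌈β / t ^ 2⌉₊) (𝓝[>] 0) atTop := by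
    refine tendsto_nat_ceil_atTop.comp ?_
    have := ((tendsto_pow_atTop two_ne_zero).comp tendsto_inv_nhdsGT_zero).const_mul_atTop hβ
    simpa only [Function.comp_def, inv_pow, ← div_eq_mul_inv] using this
  filter_upwards [hm.eventually_ge_atTop N, self_mem_nhdsWithin] with t hmN (ht : 0 < t)
  set m := ⌈β / t ^ 2⌉₊
  have hm_ge : β / t ^ 2 ≤ m := Nat.le_ceil _
  have hm_lt : (m : ℝ) < β / t ^ 2 + 1 := Nat.ceil_lt_add_one (by positivity)
  have hsqrt : β / t ≤ √(β * m) := by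
    refine le_sqrt_of_sq_le ?_
    calc (β / t) ^ 2 = β * (β / t ^ 2) := by ring
      _ ≤ β * m := by gcongr
  have hlog_bm : 2 * (β / t) ≤ log (b m) := by linarith [hN m hmN]
  have hbm : 0 < b m :=
    one_pos.trans <| (log_pos_iff (hb m)).1 <| (by positivity : 0 < 2 * (β / t)).trans_le hlog_bm
  have hterm : log (b m) - t * m ≤ log (∑' n, b n * exp (-t) ^ n) := by
    have hle := (hsum t ht).le_tsum m fun n _ => by have := hb n; positivity
    calc log (b m) - t * m = log (b m * exp (-t) ^ m) := by
          rw [log_mul hbm.ne' (by positivity), log_pow, log_exp]; ring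
      _ ≤ _ := log_le_log (by positivity) hle
  have htm : t * m < β / t + t := by
    calc t * m < t * (β / t ^ 2 + 1) := by gcongr
      _ = β / t + t := by field_simp
  calc β - t ^ 2 = t * (β / t - t) := by field_simp
    _ ≤ _ := by gcongr; linarith

lemma eventually_mul_log_tsum_lt (hb : ∀ n, 0 ≤ b n) (hβ : 0 ≤ β) (hβγ : β < γ)
    (hup : ∀ᶠ n : ℕ in atTop, log (b n) ≤ 2 * √(β * n)) :
    ∀ᶠ t in 𝓝[>] 0, t * log (∑' n, b n * exp (-t) ^ n) < γ := by
  obtain ⟨M, hM, hbM⟩ := exists_le_mul_exp_of_eventually_log_le (fun n => by positivity) hup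
  obtain ⟨γ₁, hβγ₁, hγ₁γ⟩ := exists_between hβγ
  have hγ₁ : 0 < γ₁ := hβ.trans_lt hβγ₁
  set κ := 1 - β / γ₁
  have hκ : 0 < κ := by rw [sub_pos, div_lt_one hγ₁]; exact hβγ₁
  filter_upwards [(tendsto_mul_log_mul_exp_div hM hκ).eventually (gt_mem_nhds (sub_pos.2 hγ₁γ)),
    self_mem_nhdsWithin] with t hR (ht : 0 < t)
  have hterm (n : ℕ) : b n * exp (-t) ^ n ≤ M * exp (γ₁ / t) * exp (-(κ * t)) ^ n :=
    mul_exp_neg_pow_le_of_le_mul_exp_two_sqrt hM.le hβ hγ₁ ht (hbM n)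
  have hgeo : Summable fun n : ℕ => M * exp (γ₁ / t) * exp (-(κ * t)) ^ n :=
    (summable_geometric_of_lt_one (exp_pos _).le
      (exp_lt_one_iff.2 (neg_lt_zero.2 (by positivity)))).mul_left _
  have hG : ∑' n, b n * exp (-t) ^ n ≤ exp (γ₁ / t) * (M * exp (κ * t) / (κ * t)) := by
    calc ∑' n, b n * exp (-t) ^ n ≤ ∑' n : ℕ, M * exp (γ₁ / t) * exp (-(κ * t)) ^ n :=
          (hgeo.of_nonneg_of_le (fun n => by have := hb n; positivity) hterm).tsum_le_tsum
            hterm hgeo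
      _ = M * exp (γ₁ / t) * ∑' n : ℕ, exp (-(κ * t)) ^ n := tsum_mul_left
      _ ≤ M * exp (γ₁ / t) * (exp (κ * t) / (κ * t)) := by
          gcongr; exact tsum_exp_neg_pow_le (by positivity)
      _ = exp (γ₁ / t) * (M * exp (κ * t) / (κ * t)) := by ring
  rcases (tsum_nonneg fun n => by have := hb n; positivity :
    0 ≤ ∑' n, b n * exp (-t) ^ n).eq_or_lt with h0 | hpos
  · rw [← h0, log_zero, mul_zero]; linarith
  · calc t * log (∑' n, b n * exp (-t) ^ n)
        ≤ t * log (exp (γ₁ / t) * (M * exp (κ * t) / (κ * t))) := by gcongr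
      _ = γ₁ + t * log (M * exp (κ * t) / (κ * t)) := by
          rw [log_mul (exp_pos _).ne' (by positivity), log_exp]; field_simp
      _ < γ := by linarith

theorem tendsto_mul_log_tsum_exp_neg_pow (hb : ∀ n, 0 ≤ b n)
    (hsum : ∀ t > 0, Summable fun n => b n * exp (-t) ^ n) (hα : 0 < α)
    (hbn : (fun n => log (b n)) ~[atTop] fun n : ℕ => 2 * √(α * n)) :
    Tendsto (fun t => t * log (∑' n, b n * exp (-t) ^ n)) (𝓝[>] 0) (𝓝 α) := by
  refine tendsto_order.2 ⟨fun a ha => ?_, fun a ha => ?_⟩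
  · obtain ⟨β, hβa, hβα⟩ := exists_between (max_lt ha hα)
    have hsq : ∀ᶠ t in 𝓝[>] (0 : ℝ), t ^ 2 < β - a := by
      have h : Tendsto (fun t : ℝ => t ^ 2) (𝓝 0) (𝓝 0) := (continuous_pow 2).tendsto' 0 0 (by simp)
      exact (h.mono_left nhdsWithin_le_nhds).eventually
        (gt_mem_nhds (by linarith [le_max_left a 0]))
    filter_upwards [eventually_sub_sq_le_mul_log_tsum hb hsum
      ((le_max_right a 0).trans_lt hβa) (hbn.eventually_two_sqrt_le hα hβα), hsq] with t h1 h2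
    linarith
  · obtain ⟨β, hαβ, hβa⟩ := exists_between ha
    exact eventually_mul_log_tsum_lt hb (hα.le.trans hαβ.le) hβa
      (hbn.eventually_le_two_sqrt hα hαβ)

end PowerSeries

theorem abelian_equivalent (b : ℕ → ℝ) (hb : ∀ n, 0 ≤ b n)
    (hconv : ∀ x : ℝ, |x| < 1 → Summable fun n => b n * x ^ n)
    (α : ℝ) (hα : 0 < α)
    (hbn : (fun n : ℕ => Real.log (b n)) ~[atTop]
      (fun n : ℕ => 2 * Real.sqrt (α * n))) :
    (fun x : ℝ => Real.log (∑' n, b n * x ^ n)) ~[nhdsWithin 1 (Set.Iio 1)]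
      (fun x : ℝ => α / (1 - x)) := by
  have hsum (t : ℝ) (ht : 0 < t) : Summable fun n => b n * exp (-t) ^ n :=
    hconv _ (by rw [abs_of_pos (exp_pos _)]; exact exp_lt_one_iff.2 (neg_lt_zero.2 ht))
  have hG : (fun t => log (∑' n, b n * exp (-t) ^ n)) ~[𝓝[>] 0] fun t => α / t := by
    refine isEquivalent_of_tendsto_one ?_
    have h := (tendsto_mul_log_tsum_exp_neg_pow hb hsum hα hbn).div_const α
    rw [div_self hα.ne'] at h
    refine h.congr' ?_
    filter_upwards [self_mem_nhdsWithin] with t (ht : 0 < t)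
    simp only [Pi.div_apply]
    field_simp
  have hf : (fun x => log (∑' n, b n * x ^ n)) ~[𝓝[<] 1] fun x => α / -log x := by
    refine (hG.comp_tendsto tendsto_neg_log_nhdsLT_one).congr_left ?_
    filter_upwards [Ioo_mem_nhdsLT zero_lt_one] with x hx
    simp [exp_log hx.1]
  exact hf.trans (IsEquivalent.refl.div (isEquivalent_neg_log_one_sub.mono nhdsWithin_le_nhds))
end

section
/- Let (b_n)_{n≥0} be a sequence of nonnegative real numbers such that the power series f(x) = Σ_{n=0}^∞ b_n x^n converges for |x| < 1, and let S_B(n) = Σ_{k=0}^n b_k. Let c > 0. If f(x) ~ c/(1−x) as x → 1⁻, then S_B(n) ~ cn as n → ∞. -/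
/-!
Karamata's proof. The hypothesis says that `(1 - x) ∑ bₙ xⁿ → c` as `x → 1⁻`; substituting
`x ^ (j + 1)` for `x` gives `(1 - x) ∑ bₙ xⁿ φ(xⁿ) → c ∫₀¹ φ` for `φ = t ^ j`, hence for every
polynomial `φ`. At `x = e^(-1/N)` the weight `φ(t) = t⁻¹ · 1[t ≥ e⁻¹]` selects exactly the terms
`n ≤ N`; it is squeezed between polynomials whose integrals are within `ε` of its integral `1`
(Weierstrass applied to continuous ramps), and `bₙ ≥ 0` turns this squeeze into one on the partial
sums. So `(1 - e^(-1/N)) S(N) → c`, and `N (1 - e^(-1/N)) → 1`.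
-/

open Filter Asymptotics Real Set Topology Polynomial

lemma tendsto_one_sub_mul_of_isEquivalent {f : ℝ → ℝ} {c : ℝ}
    (hf : f ~[𝓝[<] 1] fun x => c / (1 - x)) :
    Tendsto (fun x => (1 - x) * f x) (𝓝[<] 1) (𝓝 c) := by
  have h : (fun x => (1 - x) * f x) ~[𝓝[<] 1] fun x => (1 - x) * (c / (1 - x)) :=
    IsEquivalent.refl.mul hf
  refine h.symm.tendsto_nhds (tendsto_const_nhds.congr' ?_)
  filter_upwards [self_mem_nhdsWithin] with x (hx : x < 1)
  rw [mul_div_cancel₀ _ (sub_ne_zero.2 hx.ne')]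

lemma tendsto_pow_nhdsLT_one {k : ℕ} (hk : k ≠ 0) :
    Tendsto (fun x : ℝ => x ^ k) (𝓝[<] 1) (𝓝[<] 1) := by
  refine tendsto_nhdsWithin_of_tendsto_nhds_of_eventually_within _ ?_ ?_
  · simpa using ((continuous_pow k).tendsto (1 : ℝ)).mono_left nhdsWithin_le_nhds
  · filter_upwards [Ioo_mem_nhdsLT zero_lt_one] with x hx
    exact pow_lt_one₀ hx.1.le hx.2 hk

-- `(1 - x) F(x^k) = (1 - x^k) F(x^k) / (1 + x + ⋯ + x^(k-1))`
lemma tendsto_one_sub_mul_comp_pow {F : ℝ → ℝ} {c : ℝ}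
    (hF : Tendsto (fun y => (1 - y) * F y) (𝓝[<] 1) (𝓝 c)) {k : ℕ} (hk : k ≠ 0) :
    Tendsto (fun x => (1 - x) * F (x ^ k)) (𝓝[<] 1) (𝓝 (c / k)) := by
  have hgeom : Tendsto (fun x : ℝ => ∑ i ∈ Finset.range k, x ^ i) (𝓝[<] 1) (𝓝 k) := by
    simpa using ((continuous_finsetSum (Finset.range k) fun i _ => continuous_pow i).tendsto
      (1 : ℝ)).mono_left (nhdsWithin_le_nhds (s := Iio 1))
  refine ((hF.comp (tendsto_pow_nhdsLT_one hk)).div hgeom (by exact_mod_cast hk)).congr' ?_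
  filter_upwards [Ioo_mem_nhdsLT zero_lt_one] with x hx
  have hpos : 0 < ∑ i ∈ Finset.range k, x ^ i :=
    Finset.sum_pos (fun i _ => pow_pos hx.1 i) (Finset.nonempty_range_iff.2 hk)
  have := geom_sum_mul x k
  simp only [Pi.div_apply, Function.comp_apply]
  field_simp
  linear_combination F (x ^ k) * this

lemma summable_mul_pow_mul_comp_pow {b : ℕ → ℝ} (hb : ∀ n, 0 ≤ b n)
    (hconv : ∀ x : ℝ, |x| < 1 → Summable fun n => b n * x ^ n)
    {φ : ℝ → ℝ} {M : ℝ} (hφ : ∀ t ∈ Icc (0 : ℝ) 1, ‖φ t‖ ≤ M) {x : ℝ} (hx : x ∈ Ico 0 1) :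
    Summable fun n => b n * x ^ n * φ (x ^ n) := by
  refine ((hconv x (abs_lt.2 ⟨by linarith [hx.1], hx.2⟩)).mul_right M).of_norm_bounded
    fun n => ?_
  have hxn : x ^ n ∈ Icc (0 : ℝ) 1 := ⟨pow_nonneg hx.1 n, pow_le_one₀ hx.1 hx.2.le⟩
  rw [norm_mul, Real.norm_of_nonneg (mul_nonneg (hb n) hxn.1)]
  exact mul_le_mul_of_nonneg_left (hφ _ hxn) (mul_nonneg (hb n) hxn.1)

lemma tsum_mul_pow_mul_comp_pow_le {b : ℕ → ℝ} (hb : ∀ n, 0 ≤ b n) {φ ψ : ℝ → ℝ}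
    (hφψ : ∀ t ∈ Icc (0 : ℝ) 1, φ t ≤ ψ t) {x : ℝ} (hx : x ∈ Icc 0 1)
    (hφ : Summable fun n => b n * x ^ n * φ (x ^ n))
    (hψ : Summable fun n => b n * x ^ n * ψ (x ^ n)) :
    ∑' n, b n * x ^ n * φ (x ^ n) ≤ ∑' n, b n * x ^ n * ψ (x ^ n) :=
  hφ.tsum_le_tsum (fun n => mul_le_mul_of_nonneg_left
    (hφψ _ ⟨pow_nonneg hx.1 n, pow_le_one₀ hx.1 hx.2⟩)
    (mul_nonneg (hb n) (pow_nonneg hx.1 n))) hψ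

lemma summable_mul_pow_mul_eval {b : ℕ → ℝ} (hb : ∀ n, 0 ≤ b n)
    (hconv : ∀ x : ℝ, |x| < 1 → Summable fun n => b n * x ^ n) (p : ℝ[X]) {x : ℝ}
    (hx : x ∈ Ico 0 1) : Summable fun n => b n * x ^ n * p.eval (x ^ n) :=
  have ⟨_, hM⟩ := isCompact_Icc.exists_bound_of_continuousOn p.continuous.continuousOn
  summable_mul_pow_mul_comp_pow hb hconv hM hx

lemma tendsto_one_sub_mul_tsum_mul_eval {b : ℕ → ℝ} (hb : ∀ n, 0 ≤ b n)
    (hconv : ∀ x : ℝ, |x| < 1 → Summable fun n => b n * x ^ n) {c : ℝ}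
    (hbase : Tendsto (fun x => (1 - x) * ∑' n, b n * x ^ n) (𝓝[<] 1) (𝓝 c)) (p : ℝ[X]) :
    Tendsto (fun x => (1 - x) * ∑' n, b n * x ^ n * p.eval (x ^ n)) (𝓝[<] 1)
      (𝓝 (c * ∫ t in (0 : ℝ)..1, p.eval t)) := by
  induction p using Polynomial.induction_on' with
  | add p q hp hq =>
    have hint : ∫ t in (0 : ℝ)..1, (p + q).eval t
        = (∫ t in (0 : ℝ)..1, p.eval t) + ∫ t in (0 : ℝ)..1, q.eval t := by
      simp only [eval_add]
      exact intervalIntegral.integral_add (p.continuous.intervalIntegrable 0 1)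
        (q.continuous.intervalIntegrable 0 1)
    rw [hint, mul_add]
    refine (hp.add hq).congr' ?_
    filter_upwards [Ioo_mem_nhdsLT zero_lt_one] with x hx
    simp only [eval_add, mul_add]
    rw [(summable_mul_pow_mul_eval hb hconv p (Ioo_subset_Ico_self hx)).tsum_add
      (summable_mul_pow_mul_eval hb hconv q (Ioo_subset_Ico_self hx)), mul_add]
  | monomial j a =>
    have hj := tendsto_one_sub_mul_comp_pow hbase (k := j + 1) j.succ_ne_zero
    convert hj.const_mul a using 1
    · ext x
      simp only [eval_monomial, ← tsum_mul_left]
      congr 1 with n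
      ring
    · simp only [eval_monomial, intervalIntegral.integral_const_mul, integral_pow]
      norm_num
      ring

lemma exists_polynomial_le_integral_add {h : ℝ → ℝ} (hh : Continuous h) {ε : ℝ} (hε : 0 < ε) :
    ∃ p : ℝ[X], (∀ t ∈ Icc (0 : ℝ) 1, p.eval t ≤ h t) ∧
      ∫ t in (0 : ℝ)..1, h t ≤ (∫ t in (0 : ℝ)..1, p.eval t) + ε := by
  obtain ⟨q, hq⟩ := exists_polynomial_near_of_continuousOn 0 1 h hh.continuousOn (ε / 2)
    (half_pos hε)
  refine ⟨q - C (ε / 2), fun t ht => ?_, ?_⟩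
  · simp only [eval_sub, eval_C]
    linarith [(abs_lt.1 (hq t ht)).2]
  · have hle : ∫ t in (0 : ℝ)..1, h t - ε ≤ ∫ t in (0 : ℝ)..1, (q - C (ε / 2)).eval t := by
      refine intervalIntegral.integral_mono_on zero_le_one
        ((hh.sub continuous_const).intervalIntegrable 0 1)
        ((q - C (ε / 2)).continuous.intervalIntegrable 0 1) fun t ht => ?_
      simp only [eval_sub, eval_C]
      linarith [(abs_lt.1 (hq t ht)).1]
    rw [intervalIntegral.integral_sub (hh.intervalIntegrable 0 1) intervalIntegrable_const] at hle
    simp only [intervalIntegral.integral_const, sub_zero, one_smul] at hle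
    linarith

lemma exists_polynomial_ge_integral_sub {h : ℝ → ℝ} (hh : Continuous h) {ε : ℝ} (hε : 0 < ε) :
    ∃ P : ℝ[X], (∀ t ∈ Icc (0 : ℝ) 1, h t ≤ P.eval t) ∧
      (∫ t in (0 : ℝ)..1, P.eval t) - ε ≤ ∫ t in (0 : ℝ)..1, h t := by
  obtain ⟨p, hp, hint⟩ := exists_polynomial_le_integral_add hh.neg hε
  refine ⟨-p, fun t ht => ?_, ?_⟩
  · simpa only [eval_neg, Pi.neg_apply, le_neg] using hp t ht
  · simp only [eval_neg, Pi.neg_apply, intervalIntegral.integral_neg] at hint ⊢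
    linarith

noncomputable def rampInv (u v t : ℝ) : ℝ :=
  min 1 (max 0 ((t - u) / (v - u))) * (max t u)⁻¹

section rampInv

variable {u v : ℝ}

lemma continuous_rampInv (hu : 0 < u) : Continuous (rampInv u v) :=
  (continuous_const.min (continuous_const.max
    ((continuous_id.sub continuous_const).div_const _))).mul
    ((continuous_id.max continuous_const).inv₀ fun _ => (lt_max_of_lt_right hu).ne')

lemma rampInv_nonneg (hu : 0 < u) (t : ℝ) : 0 ≤ rampInv u v t :=
  mul_nonneg (le_min zero_le_one (le_max_left _ _))
    (inv_nonneg.2 (hu.le.trans (le_max_right _ _)))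

lemma rampInv_of_le (huv : u < v) {t : ℝ} (ht : t ≤ u) : rampInv u v t = 0 := by
  have : (t - u) / (v - u) ≤ 0 := div_nonpos_of_nonpos_of_nonneg (by linarith) (by linarith)
  simp [rampInv, max_eq_left this]

lemma rampInv_of_ge (huv : u < v) {t : ℝ} (ht : v ≤ t) : rampInv u v t = t⁻¹ := by
  have : 1 ≤ (t - u) / (v - u) := (one_le_div (by linarith)).2 (by linarith)
  simp [rampInv, max_eq_right (zero_le_one.trans this), max_eq_left (huv.le.trans ht), this]

lemma rampInv_le_inv (hu : 0 < u) {t : ℝ} (ht : u ≤ t) : rampInv u v t ≤ t⁻¹ := by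
  rw [rampInv, max_eq_left ht]
  exact mul_le_of_le_one_left (inv_nonneg.2 (hu.le.trans ht)) (min_le_left _ _)

lemma neg_log_le_integral_rampInv (hu : 0 < u) (huv : u < v) (hv : v ≤ 1) :
    -log v ≤ ∫ t in (0 : ℝ)..1, rampInv u v t := by
  have hv0 : 0 < v := hu.trans huv
  have hleft : 0 ≤ ∫ t in (0 : ℝ)..v, rampInv u v t :=
    intervalIntegral.integral_nonneg hv0.le fun t _ => rampInv_nonneg hu t
  have hright : ∫ t in v..1, rampInv u v t = -log v := by
    rw [intervalIntegral.integral_congr (g := fun t => t⁻¹) fun t ht =>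
      rampInv_of_ge huv (by rw [uIcc_of_le hv] at ht; exact ht.1),
      integral_inv_of_pos hv0 one_pos, one_div, log_inv]
  rw [← intervalIntegral.integral_add_adjacent_intervals
    ((continuous_rampInv hu).intervalIntegrable 0 v)
    ((continuous_rampInv hu).intervalIntegrable v 1)]
  linarith

lemma integral_rampInv_le_neg_log (hu : 0 < u) (huv : u < v) (hu1 : u ≤ 1) :
    ∫ t in (0 : ℝ)..1, rampInv u v t ≤ -log u := by
  have hleft : ∫ t in (0 : ℝ)..u, rampInv u v t = 0 := by
    rw [intervalIntegral.integral_congr (g := fun _ => 0) fun t ht =>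
      rampInv_of_le huv (by rw [uIcc_of_le hu.le] at ht; exact ht.2),
      intervalIntegral.integral_zero]
  have hright : ∫ t in u..1, rampInv u v t ≤ ∫ t in u..1, t⁻¹ :=
    intervalIntegral.integral_mono_on hu1 ((continuous_rampInv hu).intervalIntegrable u 1)
      (intervalIntegral.intervalIntegrable_inv
        (fun t ht => by rw [uIcc_of_le hu1] at ht; exact (hu.trans_le ht.1).ne') continuousOn_id)
      fun t ht => rampInv_le_inv hu ht.1
  rw [integral_inv_of_pos hu one_pos, one_div, log_inv] at hright
  rw [← intervalIntegral.integral_add_adjacent_intervals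
    ((continuous_rampInv hu).intervalIntegrable 0 u)
    ((continuous_rampInv hu).intervalIntegrable u 1)]
  linarith

end rampInv

lemma exists_polynomial_le_indicator_inv {a : ℝ} (ha0 : 0 < a) (ha1 : a < 1) {ε : ℝ}
    (hε : 0 < ε) :
    ∃ p : ℝ[X], (∀ t ∈ Icc (0 : ℝ) 1, p.eval t ≤ (Ici a).indicator (·⁻¹) t) ∧
      -log a - ε < ∫ t in (0 : ℝ)..1, p.eval t := by
  obtain ⟨v, hv, hlog⟩ : ∃ v ∈ Ioc a 1, log v < log a + ε / 2 :=
    (Eventually.and (Ioc_mem_nhdsGT ha1) (nhdsWithin_le_nhds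
      ((continuousAt_log ha0.ne').eventually_lt continuousAt_const (by linarith)))).exists
  obtain ⟨p, hp, hint⟩ := exists_polynomial_le_integral_add (continuous_rampInv ha0 (v := v))
    (half_pos hε)
  refine ⟨p, fun t ht => (hp t ht).trans ?_, ?_⟩
  · by_cases hat : a ≤ t
    · simpa [hat] using rampInv_le_inv ha0 hat
    · simp [hat, rampInv_of_le hv.1 (not_le.1 hat).le]
  · linarith [neg_log_le_integral_rampInv ha0 hv.1 hv.2]

lemma exists_polynomial_ge_indicator_inv {a : ℝ} (ha0 : 0 < a) (ha1 : a ≤ 1) {ε : ℝ}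
    (hε : 0 < ε) :
    ∃ P : ℝ[X], (∀ t ∈ Icc (0 : ℝ) 1, (Ici a).indicator (·⁻¹) t ≤ P.eval t) ∧
      ∫ t in (0 : ℝ)..1, P.eval t < -log a + ε := by
  obtain ⟨u, hu, hlog⟩ : ∃ u ∈ Ioo 0 a, log a - ε / 2 < log u :=
    (Eventually.and (Ioo_mem_nhdsLT ha0) (nhdsWithin_le_nhds
      (continuousAt_const.eventually_lt (continuousAt_log ha0.ne') (by linarith)))).exists
  obtain ⟨P, hP, hint⟩ := exists_polynomial_ge_integral_sub (continuous_rampInv hu.1 (v := a))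
    (half_pos hε)
  refine ⟨P, fun t ht => le_trans ?_ (hP t ht), ?_⟩
  · by_cases hat : a ≤ t
    · simp [hat, rampInv_of_ge hu.2 hat]
    · simpa [hat] using rampInv_nonneg hu.1 t
  · linarith [integral_rampInv_le_neg_log hu.1 hu.2 (hu.2.le.trans ha1)]

lemma exp_neg_one_le_exp_neg_inv_pow_iff {N : ℕ} (hN : N ≠ 0) (n : ℕ) :
    exp (-1) ≤ exp (-(N : ℝ)⁻¹) ^ n ↔ n ≤ N := by
  rw [← exp_nat_mul, exp_le_exp, mul_neg, neg_le_neg_iff, ← div_eq_mul_inv,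
    div_le_one (by positivity)]
  exact Nat.cast_le

lemma hasSum_mul_pow_mul_indicator_inv (b : ℕ → ℝ) {N : ℕ} (hN : N ≠ 0) :
    HasSum (fun n => b n * exp (-(N : ℝ)⁻¹) ^ n *
      (Ici (exp (-1))).indicator (·⁻¹) (exp (-(N : ℝ)⁻¹) ^ n))
      (∑ k ∈ Finset.range (N + 1), b k) := by
  have hterm (n : ℕ) : b n * exp (-(N : ℝ)⁻¹) ^ n *
      (Ici (exp (-1))).indicator (·⁻¹) (exp (-(N : ℝ)⁻¹) ^ n) = if n ≤ N then b n else 0 := by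
    by_cases hn : n ≤ N
    · simp [hn, (exp_neg_one_le_exp_neg_inv_pow_iff hN n).2 hn]
    · simp [hn, mt (exp_neg_one_le_exp_neg_inv_pow_iff hN n).1 hn]
  have hsum : ∑ k ∈ Finset.range (N + 1), b k
      = ∑ k ∈ Finset.range (N + 1), if k ≤ N then b k else 0 :=
    Finset.sum_congr rfl fun k hk => by simp [Nat.lt_succ_iff.1 (Finset.mem_range.1 hk)]
  simp_rw [hterm, hsum]
  exact hasSum_sum_of_ne_finset_zero fun n hn => by simp_all

lemma tendsto_exp_neg_inv_natCast :
    Tendsto (fun N : ℕ => exp (-(N : ℝ)⁻¹)) atTop (𝓝[<] 1) := by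
  refine tendsto_nhdsWithin_of_tendsto_nhds_of_eventually_within _ ?_ ?_
  · have h0 : Tendsto (fun N : ℕ => -(N : ℝ)⁻¹) atTop (𝓝 0) := by
      simpa using (tendsto_inv_atTop_zero.comp (tendsto_natCast_atTop_atTop (R := ℝ))).neg
    simpa [Function.comp_def] using (continuous_exp.tendsto 0).comp h0
  · filter_upwards [eventually_ne_atTop 0] with N hN
    exact exp_lt_one_iff.2 (by simp [Nat.pos_of_ne_zero hN])

lemma tendsto_natCast_mul_one_sub_exp_neg_inv :
    Tendsto (fun N : ℕ => N * (1 - exp (-(N : ℝ)⁻¹))) atTop (𝓝 1) := by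
  have hderiv : HasDerivAt (fun t => exp (-t)) (-1) 0 := by
    simpa using (hasDerivAt_neg 0).exp
  have := (hderiv.tendsto_slope_zero_right.comp tendsto_inv_atTop_nhdsGT_zero).comp
    tendsto_natCast_atTop_atTop
  simpa [mul_sub] using this.neg

lemma eventually_lt_one_sub_mul_sum_range {b : ℕ → ℝ} (hb : ∀ n, 0 ≤ b n)
    (hconv : ∀ x : ℝ, |x| < 1 → Summable fun n => b n * x ^ n) {c : ℝ} (hc : 0 < c)
    (hbase : Tendsto (fun x => (1 - x) * ∑' n, b n * x ^ n) (𝓝[<] 1) (𝓝 c)) {u : ℝ}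
    (hu : u < c) :
    ∀ᶠ N : ℕ in atTop, u < (1 - exp (-(N : ℝ)⁻¹)) * ∑ k ∈ Finset.range (N + 1), b k := by
  obtain ⟨p, hp, hint⟩ := exists_polynomial_le_indicator_inv (exp_pos (-1))
    (exp_lt_one_iff.2 neg_one_lt_zero) (sub_pos.2 ((div_lt_one hc).2 hu))
  rw [log_exp, neg_neg, sub_sub_cancel, div_lt_iff₀' hc] at hint
  have hlim := (tendsto_one_sub_mul_tsum_mul_eval hb hconv hbase p).comp tendsto_exp_neg_inv_natCast
  filter_upwards [hlim.eventually (lt_mem_nhds hint),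
    tendsto_exp_neg_inv_natCast.eventually_mem (Ioo_mem_nhdsLT zero_lt_one),
    eventually_ne_atTop 0] with N hpN hxN hN
  have hS := hasSum_mul_pow_mul_indicator_inv b hN
  refine hpN.trans_le (mul_le_mul_of_nonneg_left ?_ (sub_nonneg.2 hxN.2.le))
  rw [← hS.tsum_eq]
  exact tsum_mul_pow_mul_comp_pow_le hb hp (Ioo_subset_Icc_self hxN)
    (summable_mul_pow_mul_eval hb hconv p (Ioo_subset_Ico_self hxN)) hS.summable

lemma eventually_one_sub_mul_sum_range_lt {b : ℕ → ℝ} (hb : ∀ n, 0 ≤ b n)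
    (hconv : ∀ x : ℝ, |x| < 1 → Summable fun n => b n * x ^ n) {c : ℝ} (hc : 0 < c)
    (hbase : Tendsto (fun x => (1 - x) * ∑' n, b n * x ^ n) (𝓝[<] 1) (𝓝 c)) {u : ℝ}
    (hu : c < u) :
    ∀ᶠ N : ℕ in atTop, (1 - exp (-(N : ℝ)⁻¹)) * ∑ k ∈ Finset.range (N + 1), b k < u := by
  obtain ⟨P, hP, hint⟩ := exists_polynomial_ge_indicator_inv (exp_pos (-1))
    (exp_le_one_iff.2 (by norm_num)) (sub_pos.2 ((one_lt_div hc).2 hu))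
  rw [log_exp, neg_neg, add_sub_cancel, lt_div_iff₀' hc] at hint
  have hlim := (tendsto_one_sub_mul_tsum_mul_eval hb hconv hbase P).comp tendsto_exp_neg_inv_natCast
  filter_upwards [hlim.eventually (gt_mem_nhds hint),
    tendsto_exp_neg_inv_natCast.eventually_mem (Ioo_mem_nhdsLT zero_lt_one),
    eventually_ne_atTop 0] with N hPN hxN hN
  have hS := hasSum_mul_pow_mul_indicator_inv b hN
  refine (mul_le_mul_of_nonneg_left ?_ (sub_nonneg.2 hxN.2.le)).trans_lt hPN
  rw [← hS.tsum_eq]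
  exact tsum_mul_pow_mul_comp_pow_le hb hP (Ioo_subset_Icc_self hxN) hS.summable
    (summable_mul_pow_mul_eval hb hconv P (Ioo_subset_Ico_self hxN))

theorem tauberian_equivalent (b : ℕ → ℝ) (hb : ∀ n, 0 ≤ b n)
    (hconv : ∀ x : ℝ, |x| < 1 → Summable fun n => b n * x ^ n)
    (c : ℝ) (hc : 0 < c)
    (hf : (fun x : ℝ => ∑' n, b n * x ^ n) ~[nhdsWithin 1 (Set.Iio 1)]
      (fun x : ℝ => c / (1 - x))) :
    (fun n : ℕ => ∑ k ∈ Finset.range (n + 1), b k) ~[atTop]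
      (fun n : ℕ => c * n) := by
  have hbase := tendsto_one_sub_mul_of_isEquivalent hf
  have hmean : Tendsto (fun N : ℕ => (1 - exp (-(N : ℝ)⁻¹)) * ∑ k ∈ Finset.range (N + 1), b k)
      atTop (𝓝 c) :=
    tendsto_order.2 ⟨fun u hu => eventually_lt_one_sub_mul_sum_range hb hconv hc hbase hu,
      fun u hu => eventually_one_sub_mul_sum_range_lt hb hconv hc hbase hu⟩
  have hratio := hmean.div (tendsto_natCast_mul_one_sub_exp_neg_inv.const_mul c)
    (by simpa using hc.ne')
  rw [mul_one, div_self hc.ne'] at hratio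
  refine isEquivalent_of_tendsto_one (hratio.congr' ?_)
  filter_upwards [tendsto_exp_neg_inv_natCast.eventually_mem self_mem_nhdsWithin] with N hN
  simp only [Pi.div_apply]
  rw [mul_comm (N : ℝ), mul_left_comm c, mul_div_mul_left _ _ (sub_ne_zero.2 (ne_of_gt hN))]
end

section
/- Let A be a nonempty finite set of relatively prime positive integers of cardinality k. Then p_A(n) = (1/∏_{a∈A} a) · n^{k−1}/(k−1)! + O(n^{k−2}) as n → ∞. -/
/-!
Induction on `k = #A`. For `k = 1` the gcd condition forces `A = {1}` and `p_A(n) = 1` exactly.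
Otherwise split off one part `a`; the remaining parts are `g • B` with `g` coprime to `a` and
`gcd B = 1`. Sorting partitions by the multiplicity `j` of `a`, only the `j ≡ r (mod g)` survive,
where `n = g M + a r` with `0 ≤ r < g`, and this gives `p_A(n) = ∑_{t ≤ M/a} p_B(M - a t)`.
Inserting the induction hypothesis `p_B(m) = m^(k-2)/((k-2)! ∏ B) + O(m^(k-3))`, comparing
`∑_t (M - a t)^(k-2)` with `M^(k-1) / (a (k-1))` by telescoping, and using `M = n/g + O(1)`
gives the claim. Since the `O(m^(k-3))` errors are summed over `≈ M/a` terms, the exactness of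
the case `k = 1` is what makes the step to `k = 2` work.
-/

open Filter Asymptotics Real

/-- `pA A n` is the number of partitions of `n` all of whose parts lie in `A`. -/
noncomputable def pA (A : Set ℕ) (n : ℕ) : ℕ :=
  Nat.card {p : n.Partition // ∀ a ∈ p.parts, a ∈ A}

open Finset
open scoped Nat

lemma pA_singleton_one (n : ℕ) : pA {1} n = 1 := by
  rw [pA, Nat.card_eq_one_iff_unique]
  refine ⟨⟨fun p q => Subtype.ext <| Nat.Partition.ext ?_⟩,
    ⟨⟨⟨Multiset.replicate n 1, fun h => by simp [Multiset.eq_of_mem_replicate h], by simp⟩,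
      fun x hx => Multiset.eq_of_mem_replicate hx⟩⟩⟩
  have h (p : {p : n.Partition // ∀ a ∈ p.parts, a ∈ ({1} : Set ℕ)}) :
      p.1.parts = Multiset.replicate n 1 := by
    have hp : p.1.parts = Multiset.replicate (Multiset.card p.1.parts) 1 :=
      Multiset.eq_replicate_card.mpr p.2
    have hcard := congrArg Multiset.sum hp
    rw [p.1.parts_sum, Multiset.sum_replicate, smul_eq_mul, mul_one] at hcard
    rw [hp, ← hcard]
  rw [h p, h q]

lemma pA_insert_of_lt {A : Set ℕ} {a n : ℕ} (hn : n < a) : pA (insert a A) n = pA A n :=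
  Nat.card_congr <| Equiv.subtypeEquivRight fun p =>
    forall₂_congr fun _ hx => or_iff_right (p.le_of_mem_parts hx |>.trans_lt hn).ne

lemma pA_insert_of_le {A : Set ℕ} {a n : ℕ} (ha : 0 < a) (haA : a ∉ A) (han : a ≤ n) :
    pA (insert a A) n = pA A n + pA (insert a A) (n - a) := by
  classical
  let P : ∀ {m : ℕ}, m.Partition → Prop := fun p => ∀ x ∈ p.parts, x ∈ insert a A
  let notContaining : {p : {p : n.Partition // P p} // a ∉ p.1.parts} ≃
      {p : n.Partition // ∀ x ∈ p.parts, x ∈ A} :=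
    (Equiv.subtypeSubtypeEquivSubtypeInter (fun p : n.Partition => P p)
      (fun p => a ∉ p.parts)).trans <| Equiv.subtypeEquivRight fun p =>
      ⟨fun h x hx => (h.1 x hx).resolve_left (ne_of_mem_of_not_mem hx h.2),
        fun h => ⟨fun x hx => Or.inr (h x hx), fun ha => haA (h a ha)⟩⟩
  let containing : {p : {p : n.Partition // P p} // a ∈ p.1.parts} ≃
      {q : (n - a).Partition // P q} :=
    (Equiv.subtypeSubtypeEquivSubtypeInter _ _).trans <|
      (Equiv.subtypeEquivRight fun _ => and_comm).trans <|
      (Equiv.subtypeSubtypeEquivSubtypeInter _ _).symm.trans <|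
      (Nat.Partition.partitionWithPartEquiv ha han).subtypeEquiv fun p => by
        simp only [P, Nat.Partition.partitionWithPartEquiv_apply_parts]
        conv_lhs => rw [← Multiset.cons_erase p.2]
        simp
  rw [pA, pA, pA, ← Nat.card_sum]
  exact Nat.card_congr <|
    (Equiv.sumCompl fun p : {p : n.Partition // P p} => a ∈ p.1.parts).symm.trans <|
      (Equiv.sumComm _ _).trans (notContaining.sumCongr containing)

lemma pA_insert_eq_sum {A : Set ℕ} {a : ℕ} (ha : 0 < a) (haA : a ∉ A) (n : ℕ) :
    pA (insert a A) n = ∑ j ∈ range (n / a + 1), pA A (n - a * j) := by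
  induction n using Nat.strong_induction_on with
  | _ n ih =>
  rcases lt_or_ge n a with hn | hn
  · simp [pA_insert_of_lt hn, Nat.div_eq_of_lt hn]
  rw [pA_insert_of_le ha haA hn, ih (n - a) (by omega), Nat.div_eq_sub_div ha hn,
    sum_range_succ' _ ((n - a) / a + 1)]
  simp only [mul_zero, Nat.sub_zero, mul_add, mul_one, Nat.sub_add_eq, Nat.sub_right_comm n]
  ring

lemma pA_image_mul {A : Set ℕ} {g : ℕ} (hg : 0 < g) (m : ℕ) :
    pA ((g * ·) '' A) (g * m) = pA A m := by
  have hdiv (p : {p : (g * m).Partition // ∀ x ∈ p.parts, x ∈ (g * ·) '' A}) :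
      (p.1.parts.map (· / g)).map (g * ·) = p.1.parts := by
    rw [Multiset.map_map]
    conv_rhs => rw [← Multiset.map_id p.1.parts]
    refine Multiset.map_congr rfl fun x hx => ?_
    obtain ⟨y, -, rfl⟩ := p.2 x hx
    simp [Nat.mul_div_cancel_left y hg]
  refine Nat.card_congr
    { toFun := fun p => ⟨⟨p.1.parts.map (· / g), fun hi => ?_, ?_⟩, fun x hx => ?_⟩
      invFun := fun q => ⟨⟨q.1.parts.map (g * ·), fun hi => ?_, ?_⟩, fun x hx => ?_⟩
      left_inv := fun p => Subtype.ext <| Nat.Partition.ext (hdiv p)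
      right_inv := fun q => Subtype.ext <| Nat.Partition.ext ?_ }
  · obtain ⟨x, hx, rfl⟩ := Multiset.mem_map.mp hi
    obtain ⟨y, -, rfl⟩ := p.2 x hx
    simpa [Nat.mul_div_cancel_left y hg, hg] using p.1.parts_pos hx
  · have := congrArg Multiset.sum (hdiv p)
    rw [Multiset.sum_map_mul_left, Multiset.map_id', p.1.parts_sum] at this
    exact Nat.eq_of_mul_eq_mul_left hg this
  · obtain ⟨y, hy, rfl⟩ := Multiset.mem_map.mp hx
    obtain ⟨z, hz, rfl⟩ := p.2 y hy
    simpa [Nat.mul_div_cancel_left z hg] using hz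
  · obtain ⟨x, hx, rfl⟩ := Multiset.mem_map.mp hi
    exact Nat.mul_pos hg (q.1.parts_pos hx)
  · rw [Multiset.sum_map_mul_left, Multiset.map_id', q.1.parts_sum]
  · obtain ⟨y, hy, rfl⟩ := Multiset.mem_map.mp hx
    exact ⟨y, q.2 y hy, rfl⟩
  · simp [Multiset.map_map, Nat.mul_div_cancel_left _ hg]

lemma pA_image_mul_of_not_dvd {A : Set ℕ} {g n : ℕ} (hn : ¬ g ∣ n) :
    pA ((g * ·) '' A) n = 0 := by
  rw [pA, Nat.card_eq_zero]
  refine Or.inl ⟨fun ⟨p, hp⟩ => hn ?_⟩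
  rw [← p.parts_sum]
  exact Multiset.dvd_sum fun x hx => by obtain ⟨y, -, rfl⟩ := hp x hx; exact dvd_mul_right g y

lemma exists_mul_add_mul_eq {a g n : ℕ} (hcop : a.Coprime g) (hg : 0 < g) (hn : a * g ≤ n) :
    ∃ M r, r < g ∧ g * M + a * r = n := by
  have : NeZero g := ⟨hg.ne'⟩
  set r := ((a : ZMod g)⁻¹ * n).val
  have hr : r < g := ZMod.val_lt _
  have har : a * r ≤ n := (Nat.mul_le_mul_left a hr.le).trans hn
  have hmod : a * r ≡ n [MOD g] := by
    rw [← ZMod.natCast_eq_natCast_iff]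
    push_cast
    rw [ZMod.natCast_val, ZMod.cast_id', id, ← mul_assoc, ZMod.coe_mul_inv_eq_one a hcop, one_mul]
  obtain ⟨M, hM⟩ := (Nat.modEq_iff_dvd' har).mp hmod
  exact ⟨M, r, hr, by omega⟩

lemma exists_eq_add_mul_of_dvd_sub {a g M r n j : ℕ} (hcop : a.Coprime g) (hr : r < g)
    (hn : g * M + a * r = n) (hj : a * j ≤ n) (hdvd : g ∣ n - a * j) :
    ∃ t, a * t ≤ M ∧ r + g * t = j := by
  have hmod : a * j ≡ a * r [MOD g] :=
    ((Nat.modEq_iff_dvd' hj).mpr hdvd).trans (by simp [← hn, Nat.ModEq])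
  have hjr : j % g = r :=
    Eq.trans (Nat.ModEq.cancel_left_of_coprime (Nat.coprime_comm.mp hcop) hmod)
      (Nat.mod_eq_of_lt hr)
  have hj' : r + g * (j / g) = j := by rw [← hjr, Nat.mod_add_div]
  refine ⟨j / g, Nat.le_of_mul_le_mul_left ?_ (by omega : 0 < g), hj'⟩
  have : a * j = a * r + g * (a * (j / g)) := by
    conv_lhs => rw [← hj']
    ring
  omega

lemma sum_range_eq_sum_range_of_dvd {β : Type*} [AddCommMonoid β] {h : ℕ → β}
    {a g M r n : ℕ} (ha : 0 < a) (hcop : a.Coprime g) (hr : r < g) (hn : g * M + a * r = n)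
    (hh : ∀ m, ¬ g ∣ m → h m = 0) :
    ∑ j ∈ range (n / a + 1), h (n - a * j) =
      ∑ t ∈ range (M / a + 1), h (g * (M - a * t)) := by
  have hle {t : ℕ} (ht : t ∈ range (M / a + 1)) : a * t ≤ M :=
    (Nat.mul_le_mul_left a (Nat.lt_succ_iff.mp (mem_range.mp ht))).trans (Nat.mul_div_le M a)
  have hsub {t : ℕ} (ht : a * t ≤ M) : n - a * (r + g * t) = g * (M - a * t) := by
    rw [Nat.mul_sub, mul_add, mul_left_comm]; omega
  have hmem {j : ℕ} : j ∈ range (n / a + 1) ↔ a * j ≤ n := by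
    rw [mem_range, Nat.lt_succ_iff, Nat.le_div_iff_mul_le ha, mul_comm]
  calc ∑ j ∈ range (n / a + 1), h (n - a * j)
      = ∑ j ∈ (range (M / a + 1)).image (r + g * ·), h (n - a * j) := by
        refine (sum_subset (fun j hj => ?_) fun j hj hjt => hh _ fun hdvd => hjt ?_).symm
        · obtain ⟨t, ht, rfl⟩ := mem_image.mp hj
          have := Nat.mul_le_mul_left g (hle ht)
          rw [hmem, mul_add, mul_left_comm]
          omega
        · obtain ⟨t, ht, rfl⟩ := exists_eq_add_mul_of_dvd_sub hcop hr hn (hmem.mp hj) hdvd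
          refine mem_image.mpr ⟨t, mem_range.mpr (Nat.lt_succ_of_le ?_), rfl⟩
          rwa [Nat.le_div_iff_mul_le ha, mul_comm]
    _ = ∑ t ∈ range (M / a + 1), h (g * (M - a * t)) := by
        rw [sum_image fun t _ t' _ htt => by simpa [(by omega : 0 < g).ne'] using htt]
        exact sum_congr rfl fun t ht => congrArg h (hsub (hle ht))

lemma pA_insert_image_mul_eq_sum {A : Set ℕ} {a g M r : ℕ} (ha : 0 < a) (hcop : a.Coprime g)
    (hr : r < g) (haA : a ∉ (g * ·) '' A) :
    pA (insert a ((g * ·) '' A)) (g * M + a * r) =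
      ∑ t ∈ range (M / a + 1), pA A (M - a * t) := by
  rw [pA_insert_eq_sum ha haA,
    sum_range_eq_sum_range_of_dvd ha hcop hr rfl fun _ hm => pA_image_mul_of_not_dvd hm]
  exact sum_congr rfl fun t _ => pA_image_mul (by omega) _

lemma abs_sum_range_pow_sub_le {M a : ℝ} {q : ℕ} (ha : 0 < a) (hq : a * q ≤ M)
    (hq' : M ≤ a * (q + 1)) (d : ℕ) :
    |∑ t ∈ range (q + 1), (M - a * t) ^ d - M ^ (d + 1) / (a * (d + 1))| ≤ M ^ d := by
  set x : ℕ → ℝ := fun t => M - a * t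
  have hx0 : x 0 = M := by simp [x]
  have hxsucc (t : ℕ) : x (t + 1) + a = x t := by simp only [x, Nat.cast_succ]; ring
  have hxnn {t : ℕ} (ht : t ≤ q) : 0 ≤ x t := by
    have : a * t ≤ a * q := by gcongr
    simp only [x]; linarith
  have hlow {t : ℕ} (ht : t < q) :
      (d + 1) * a * x (t + 1) ^ d ≤ x t ^ (d + 1) - x (t + 1) ^ (d + 1) := by
    have := pow_add_mul_le_add_pow (a := x (t + 1)) (b := a) (hxnn ht) (by linarith [hxnn ht])
      (d + 1)
    rw [hxsucc] at this
    push_cast at this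
    linarith
  have hup {t : ℕ} (ht : t < q) :
      x t ^ (d + 1) - x (t + 1) ^ (d + 1) ≤ (d + 1) * a * x t ^ d := by
    have := pow_add_mul_le_add_pow (a := x t) (b := -a) (hxnn ht.le)
      (by linarith [hxnn ht, hxsucc t]) (d + 1)
    rw [show x t + -a = x (t + 1) by linarith [hxsucc t]] at this
    push_cast at this
    linarith
  have hlast : x q ^ (d + 1) ≤ (d + 1) * a * x q ^ d := by
    have hxq : x q ≤ a := by simp only [x]; linarith
    have hpow := pow_nonneg (hxnn le_rfl) d
    rw [pow_succ]
    nlinarith [mul_le_mul_of_nonneg_left hxq hpow,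
      mul_nonneg (mul_nonneg d.cast_nonneg ha.le) hpow]
  have htel : ∑ t ∈ range q, (x t ^ (d + 1) - x (t + 1) ^ (d + 1)) =
      M ^ (d + 1) - x q ^ (d + 1) := by
    rw [sum_range_sub', hx0]
  have hsum_last := sum_range_succ (fun t => x t ^ d) q
  have hsum_first := sum_range_succ' (fun t => x t ^ d) q
  rw [hx0] at hsum_first
  have hlow_sum := sum_le_sum fun t ht => hlow (mem_range.mp ht)
  have hup_sum := sum_le_sum fun t ht => hup (mem_range.mp ht)
  rw [← mul_sum, htel] at hlow_sum hup_sum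
  have hK : 0 < a * (d + 1) := by positivity
  have hlo : M ^ (d + 1) / (a * (d + 1)) ≤ ∑ t ∈ range (q + 1), x t ^ d := by
    rw [div_le_iff₀ hK, hsum_last]
    linarith
  have hhi : ∑ t ∈ range (q + 1), x t ^ d ≤ M ^ (d + 1) / (a * (d + 1)) + M ^ d := by
    rw [← sub_le_iff_le_add, le_div_iff₀ hK, hsum_first, add_sub_cancel_right]
    linarith [pow_nonneg (hxnn le_rfl) (d + 1)]
  rw [abs_le]
  constructor <;> linarith [pow_nonneg (hxnn le_rfl) d]

lemma abs_sum_sub_div_le {f e : ℕ → ℝ} {a d : ℕ} {D : ℝ} (ha : 0 < a) (hD : 0 < D)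
    (he : Monotone e) (hf : ∀ m, |f m - m ^ d / D| ≤ e m) (M : ℕ) :
    |∑ t ∈ range (M / a + 1), f (M - a * t) - M ^ (d + 1) / (a * (d + 1) * D)| ≤
      (M + 1) * e M + M ^ d / D := by
  have hpow := abs_sum_range_pow_sub_le (M := M) (q := M / a)
    (by exact_mod_cast ha : (0 : ℝ) < a) (by exact_mod_cast Nat.mul_div_le M a)
    (by exact_mod_cast (Nat.lt_mul_div_succ M ha).le) d
  have hcast : ∑ t ∈ range (M / a + 1), ((M - a * t : ℕ) : ℝ) ^ d =
      ∑ t ∈ range (M / a + 1), ((M : ℝ) - a * t) ^ d :=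
    sum_congr rfl fun t ht => by
      rw [Nat.cast_sub ((Nat.mul_le_mul_left a (Nat.lt_succ_iff.mp (mem_range.mp ht))).trans
        (Nat.mul_div_le M a)), Nat.cast_mul]
  rw [← hcast] at hpow
  have herr : |∑ t ∈ range (M / a + 1), (f (M - a * t) - ((M - a * t : ℕ) : ℝ) ^ d / D)| ≤
      (M + 1) * e M := by
    refine (abs_sum_le_sum_abs _ _).trans <|
      (sum_le_sum fun t _ => (hf _).trans (he (Nat.sub_le _ _))).trans ?_
    rw [sum_const, card_range, nsmul_eq_mul]
    gcongr
    · exact (abs_nonneg _).trans (hf M)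
    · exact_mod_cast Nat.succ_le_succ (Nat.div_le_self M a)
  calc _ = |∑ t ∈ range (M / a + 1), (f (M - a * t) - ((M - a * t : ℕ) : ℝ) ^ d / D) +
        (∑ t ∈ range (M / a + 1), ((M - a * t : ℕ) : ℝ) ^ d - M ^ (d + 1) / (a * (d + 1))) /
          D| := by
        rw [sum_sub_distrib, ← sum_div]
        congr 1
        field_simp
        ring
    _ ≤ _ := by
        refine (abs_add_le _ _).trans (add_le_add herr ?_)
        rw [abs_div, abs_of_pos hD]
        gcongr

noncomputable def pAMainTerm (s : Finset ℕ) (n : ℕ) : ℝ :=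
  (n : ℝ) ^ (#s - 1) / ((#s - 1)! * ∏ a ∈ s, (a : ℝ))

lemma pAMainTerm_insert_image_mul {a g d : ℕ} {B : Finset ℕ} (hg : 0 < g)
    (haB : a ∉ B.image (g * ·)) (hB : #B = d + 1) (n : ℕ) :
    pAMainTerm (insert a (B.image (g * ·))) n =
      ((n : ℝ) / g) ^ (d + 1) / (a * (d + 1) * (d ! * ∏ b ∈ B, (b : ℝ))) := by
  have hinj : Function.Injective (g * ·) := fun x y h => Nat.eq_of_mul_eq_mul_left hg h
  simp only [pAMainTerm, card_insert_of_notMem haB, card_image_of_injective _ hinj, hB,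
    prod_insert haB, prod_image fun x _ y _ h => hinj h]
  push_cast
  rw [prod_mul_distrib, prod_const, hB, Nat.factorial_succ]
  push_cast
  have : (g : ℝ) ≠ 0 := by positivity
  field_simp
  rw [div_pow, mul_div_cancel₀ _ (pow_ne_zero _ this)]

lemma abs_pow_sub_div_pow_le {a g M r : ℕ} (hg : 0 < g) (hr : r < g) (d : ℕ) :
    |(M : ℝ) ^ (d + 1) - (((g * M + a * r : ℕ) : ℝ) / g) ^ (d + 1)| ≤
      a * (d + 1) * ((g * M + a * r : ℕ) : ℝ) ^ d := by
  set n := g * M + a * r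
  have hgap : |(M : ℝ) - n / g| ≤ a := by
    have hng : (n : ℝ) / g = M + a * (r / g) := by
      rw [show (n : ℝ) = g * M + a * r by push_cast [n]; ring]
      field_simp
    have hrg : (r : ℝ) / g ≤ 1 := (div_le_one (by positivity)).mpr (by exact_mod_cast hr.le)
    rw [hng, abs_sub_comm, add_sub_cancel_left, abs_of_nonneg (by positivity)]
    exact mul_le_of_le_one_right (by positivity) hrg
  have hmax : max |(M : ℝ)| |(n : ℝ) / g| ≤ n := by
    rw [abs_of_nonneg (by positivity), abs_of_nonneg (by positivity)]
    exact max_le (by exact_mod_cast le_add_right (Nat.le_mul_of_pos_left M hg))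
      (div_le_self (by positivity) (Nat.one_le_cast.mpr hg))
  calc _ ≤ |(M : ℝ) - n / g| * (d + 1 : ℕ) * max |(M : ℝ)| |(n : ℝ) / g| ^ (d + 1 - 1) :=
        abs_pow_sub_pow_le _ _ _
    _ ≤ a * (d + 1) * n ^ d := by
        rw [Nat.add_sub_cancel]
        push_cast
        gcongr

/-- `heC` carries the factor `m + 1` so that it also covers `d = 0`, where `B = {1}`, `e = 0`. -/
theorem isBigO_pA_insert_image_mul_sub {a g d : ℕ} {B : Finset ℕ} {e : ℕ → ℝ} {C : ℝ}
    (ha : 0 < a) (hg : 0 < g) (hcop : a.Coprime g) (haB : a ∉ B.image (g * ·))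
    (hBpos : ∀ b ∈ B, 0 < b) (hB : #B = d + 1) (he : Monotone e)
    (hBe : ∀ m, |(pA B m : ℝ) - pAMainTerm B m| ≤ e m)
    (heC : ∀ m : ℕ, (m + 1) * e m ≤ C * (m + 1) ^ d) :
    (fun n => (pA ↑(insert a (B.image (g * ·))) n : ℝ) -
        pAMainTerm (insert a (B.image (g * ·))) n) =O[atTop] fun n => ((n : ℝ) + 1) ^ d := by
  set D : ℝ := d ! * ∏ b ∈ B, (b : ℝ)
  have hD : 0 < D := mul_pos (by positivity) (prod_pos fun b hb => by exact_mod_cast hBpos b hb)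
  have hK : 0 < (a : ℝ) * (d + 1) * D := by positivity
  have hmainB (m : ℕ) : pAMainTerm B m = m ^ d / D := by simp [pAMainTerm, hB, D]
  refine IsBigO.of_bound (|C| + 2 / D) ?_
  filter_upwards [eventually_ge_atTop (a * g)] with n hn
  obtain ⟨M, r, hr, rfl⟩ := exists_mul_add_mul_eq hcop hg hn
  rw [coe_insert, coe_image, pA_insert_image_mul_eq_sum ha hcop hr (by simpa using haB),
    pAMainTerm_insert_image_mul hg haB hB]
  set n := g * M + a * r
  have hMn : M ≤ n := le_add_right (Nat.le_mul_of_pos_left M hg)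
  have hsum := abs_sum_sub_div_le ha hD he (fun m => hmainB m ▸ hBe m) M
  have hshift :
      |(M : ℝ) ^ (d + 1) / (a * (d + 1) * D) - ((n : ℝ) / g) ^ (d + 1) / (a * (d + 1) * D)| ≤
        n ^ d / D := by
    rw [← sub_div, abs_div, abs_of_pos hK, div_le_div_iff₀ hK hD]
    calc _ ≤ a * (d + 1) * (n : ℝ) ^ d * D := by gcongr; exact abs_pow_sub_div_pow_le hg hr d
      _ = _ := by ring
  have heM : ((M : ℝ) + 1) * e M ≤ |C| * (n + 1) ^ d :=
    (heC M).trans (by gcongr; exact le_abs_self C)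
  have hMd : (M : ℝ) ^ d ≤ (n + 1) ^ d := by gcongr; exact_mod_cast hMn.trans n.le_succ
  have hnd : (n : ℝ) ^ d ≤ (n + 1) ^ d := by gcongr; linarith
  rw [Real.norm_eq_abs, Real.norm_eq_abs,
    abs_of_nonneg (by positivity : (0 : ℝ) ≤ ((n : ℝ) + 1) ^ d), Nat.cast_sum]
  calc _ ≤ _ := abs_sub_le _ ((M : ℝ) ^ (d + 1) / (a * (d + 1) * D)) _
    _ ≤ (M + 1) * e M + M ^ d / D + n ^ d / D := add_le_add hsum hshift
    _ ≤ |C| * (n + 1) ^ d + (n + 1) ^ d / D + (n + 1) ^ d / D := by gcongr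
    _ = (|C| + 2 / D) * (n + 1) ^ d := by ring

lemma exists_eq_insert_image_mul {s : Finset ℕ} (hpos : ∀ a ∈ s, 0 < a) (hgcd : s.gcd id = 1)
    (hs : 2 ≤ #s) :
    ∃ a g B, 0 < a ∧ 0 < g ∧ a.Coprime g ∧ a ∉ B.image (g * ·) ∧
      (∀ b ∈ B, 0 < b) ∧ B.gcd id = 1 ∧ #B + 1 = #s ∧
      insert a (B.image (g * ·)) = s := by
  obtain ⟨a, ha⟩ : s.Nonempty := card_pos.mp (by omega)
  set C := s.erase a
  obtain ⟨c, hc⟩ : C.Nonempty := card_pos.mp (by rw [card_erase_of_mem ha]; omega)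
  have hCpos (x : ℕ) (hx : x ∈ C) : 0 < x := hpos x (mem_of_mem_erase hx)
  set g := C.gcd id
  have hg : 0 < g := Nat.pos_of_ne_zero fun h => (hCpos c hc).ne' (gcd_eq_zero_iff.mp h c hc)
  have hdiv (x : ℕ) (hx : x ∈ C) : g * (x / g) = x := Nat.mul_div_cancel' (gcd_dvd hx)
  have hCB : (C.image (· / g)).image (g * ·) = C := by
    rw [image_image]
    exact (image_congr fun x hx => hdiv x hx).trans image_id'
  refine ⟨a, g, C.image (· / g), hpos a ha, hg, ?_, by rw [hCB]; exact notMem_erase a s,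
    fun b hb => ?_, by rw [gcd_image]; exact gcd_div_id_eq_one hc (hCpos c hc).ne', ?_,
    by rw [hCB, insert_erase ha]⟩
  · rw [← insert_erase ha, gcd_insert] at hgcd
    exact hgcd
  · obtain ⟨x, hx, rfl⟩ := mem_image.mp hb
    exact Nat.div_pos (Nat.le_of_dvd (hCpos x hx) (gcd_dvd hx)) hg
  · rw [card_image_of_injOn fun x hx y hy h => by
      rw [← hdiv x hx, ← hdiv y hy]; exact congrArg _ h]
    exact card_erase_add_one ha

lemma eq_singleton_one_of_card_le_one {s : Finset ℕ} (hgcd : s.gcd id = 1) (hs : #s ≤ 1) :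
    s = {1} := by
  obtain ⟨b, rfl⟩ | hs := Nat.le_one_iff_eq_zero_or_eq_one.mp hs |>.symm.imp card_eq_one.mp id
  · simpa using hgcd
  · simp [card_eq_zero.mp hs] at hgcd

lemma pA_sub_pAMainTerm_singleton_one (n : ℕ) :
    (pA ↑({1} : Finset ℕ) n : ℝ) - pAMainTerm {1} n = 0 := by
  simp [pA_singleton_one, pAMainTerm]

theorem isBigO_pA_sub_pAMainTerm {s : Finset ℕ} (hpos : ∀ a ∈ s, 0 < a)
    (hgcd : s.gcd id = 1) :
    (fun n => (pA s n : ℝ) - pAMainTerm s n) =O[atTop] fun n => ((n : ℝ) + 1) ^ (#s - 2) := by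
  induction hk : #s using Nat.strong_induction_on generalizing s with
  | _ k ih =>
  rcases le_or_gt k 1 with hk1 | hk2
  · rw [eq_singleton_one_of_card_le_one hgcd (hk ▸ hk1)]
    simpa only [pA_sub_pAMainTerm_singleton_one] using isBigO_zero _ _
  obtain ⟨a, g, B, ha, hg, hcop, haB, hBpos, hBgcd, hBk, rfl⟩ :=
    exists_eq_insert_image_mul hpos hgcd (hk ▸ hk2)
  obtain ⟨d, hd⟩ : ∃ d, #B = d + 1 := ⟨k - 2, by omega⟩
  obtain ⟨e, C, he, hBe, heC⟩ : ∃ (e : ℕ → ℝ) (C : ℝ), Monotone e ∧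
      (∀ m, |(pA B m : ℝ) - pAMainTerm B m| ≤ e m) ∧
      ∀ m : ℕ, (m + 1) * e m ≤ C * (m + 1) ^ d := by
    rcases d with _ | d
    · refine ⟨0, 0, monotone_const, fun m => ?_, by simp⟩
      rw [eq_singleton_one_of_card_le_one hBgcd hd.le, pA_sub_pAMainTerm_singleton_one]
      simp
    · obtain ⟨C, hC, hCB⟩ := bound_of_isBigO_nat_atTop (ih _ (by omega) hBpos hBgcd rfl)
      refine ⟨fun m => C * ((m : ℝ) + 1) ^ d, C, fun m m' h => ?_, fun m => ?_, fun m => ?_⟩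
      · dsimp only; gcongr
      · simpa [hd, abs_of_nonneg (by positivity : (0 : ℝ) ≤ (m : ℝ) + 1)] using
          @hCB m (by positivity)
      · exact le_of_eq (by ring)
  simpa [show k - 2 = d by omega] using
    isBigO_pA_insert_image_mul_sub ha hg hcop haB hBpos hd he hBe heC

theorem partition_finite_set_asymptotics_general (s : Finset ℕ)
    (hpos : ∀ a ∈ s, 0 < a) (hgcd : s.gcd id = 1) (k : ℕ) (hk : k = s.card) :
    (fun n : ℕ => (pA (↑s) n : ℝ) -
        (1 / ∏ a ∈ s, (a : ℝ)) * (n : ℝ) ^ (k - 1) / (Nat.factorial (k - 1)))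
      =O[atTop] (fun n : ℕ => (n : ℝ) ^ ((k : ℝ) - 2)) := by
  subst hk
  have hmain (n : ℕ) :
      (1 / ∏ a ∈ s, (a : ℝ)) * (n : ℝ) ^ (#s - 1) / (#s - 1)! = pAMainTerm s n := by
    rw [pAMainTerm]; ring
  simp_rw [hmain]
  rcases le_or_gt #s 1 with hs | hs
  · rw [eq_singleton_one_of_card_le_one hgcd hs]
    simpa only [pA_sub_pAMainTerm_singleton_one] using isBigO_zero _ _
  have hexp : (#s : ℝ) - 2 = (#s - 2 : ℕ) := by push_cast [Nat.cast_sub hs]; ring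
  simp_rw [hexp, Real.rpow_natCast]
  refine (isBigO_pA_sub_pAMainTerm hpos hgcd).trans (IsBigO.pow ?_ _)
  exact (isBigO_refl _ _).add
    ((isLittleO_const_id_atTop (1 : ℝ)).isBigO.comp_tendsto tendsto_natCast_atTop_atTop)

theorem partition_finite_set_asymptotics (s : Finset ℕ) (hs : s.Nonempty)
    (hpos : ∀ a ∈ s, 0 < a) (hgcd : s.gcd id = 1) (k : ℕ) (hk : k = s.card) :
    (fun n : ℕ => (pA (↑s) n : ℝ) -
        (1 / ∏ a ∈ s, (a : ℝ)) * (n : ℝ) ^ (k - 1) / (Nat.factorial (k - 1)))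
      =O[atTop] (fun n : ℕ => (n : ℝ) ^ ((k : ℝ) - 2)) :=
  partition_finite_set_asymptotics_general s hpos hgcd k hk
end

section
/- Let n₀ be a positive integer and let A be the set of all integers greater than or equal to n₀. Then p_A(n) ≤ p_A(n+1) for all positive integers n, and p_A(n) < p_A(n+1) for all n ≥ 3n₀ + 2. -/
/-!
Raising one largest part of a partition of `n` by one is an injective map to partitions of
`n + 1`; it keeps the parts in `A = {m | n₀ ≤ m}` and its image consists of partitions whose
largest part occurs only once. For `n + 1 ≥ 3 n₀ + 2`, writing `n + 1 = 2a + c` with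
`c ∈ {n₀, n₀ + 1}` and `c ≤ a` gives the partition `a + a + c`, which lies outside the image.
-/


open Filter Asymptotics Real

theorem Multiset.sup_mem_of_ne_zero {α : Type*} [LinearOrder α] [OrderBot α] {s : Multiset α}
    (hs : s ≠ 0) : s.sup ∈ s := by
  induction s using Multiset.induction_on with
  | empty => exact absurd rfl hs
  | cons a t ih =>
    rw [Multiset.sup_cons]
    rcases eq_or_ne t 0 with rfl | ht
    · simp
    · rcases le_total a t.sup with h | h
      · rw [sup_eq_right.mpr h]
        exact Multiset.mem_cons_of_mem (ih ht)
      · rw [sup_eq_left.mpr h]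
        exact Multiset.mem_cons_self a t

namespace Nat.Partition

variable {n : ℕ}

theorem parts_ne_zero_of_pos (hn : 0 < n) (p : n.Partition) : p.parts ≠ 0 := by
  intro h
  have := p.parts_sum
  simp only [h, Multiset.sum_zero] at this
  omega

theorem sup_parts_mem (hn : 0 < n) (p : n.Partition) : p.parts.sup ∈ p.parts :=
  Multiset.sup_mem_of_ne_zero (p.parts_ne_zero_of_pos hn)

def bumpLargestPart (p : n.Partition) (hn : 0 < n) : (n + 1).Partition where
  parts := (p.parts.sup + 1) ::ₘ p.parts.erase p.parts.sup
  parts_pos {a} ha := by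
    rcases Multiset.mem_cons.mp ha with rfl | ha
    · omega
    · exact p.parts_pos (Multiset.mem_of_mem_erase ha)
  parts_sum := by
    have h := congrArg Multiset.sum (Multiset.cons_erase (p.sup_parts_mem hn))
    rw [Multiset.sum_cons, p.parts_sum] at h
    rw [Multiset.sum_cons]
    omega

variable (p : n.Partition) (hn : 0 < n)

theorem bumpLargestPart_parts :
    (p.bumpLargestPart hn).parts = (p.parts.sup + 1) ::ₘ p.parts.erase p.parts.sup :=
  rfl

theorem sup_parts_bumpLargestPart : (p.bumpLargestPart hn).parts.sup = p.parts.sup + 1 := by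
  rw [bumpLargestPart_parts, Multiset.sup_cons, sup_eq_left, Multiset.sup_le]
  exact fun b hb => (Multiset.le_sup (Multiset.mem_of_mem_erase hb)).trans (Nat.le_succ _)

theorem count_sup_parts_bumpLargestPart :
    (p.bumpLargestPart hn).parts.count (p.bumpLargestPart hn).parts.sup = 1 := by
  have hnot : p.parts.sup + 1 ∉ p.parts.erase p.parts.sup := fun hmem => by
    have := Multiset.le_sup (Multiset.mem_of_mem_erase hmem)
    omega
  rw [sup_parts_bumpLargestPart, bumpLargestPart_parts, Multiset.count_cons_self,
    Multiset.count_eq_zero_of_notMem hnot]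

theorem bumpLargestPart_injective :
    Function.Injective fun p : n.Partition => p.bumpLargestPart hn := by
  intro p q hpq
  have hparts : (p.bumpLargestPart hn).parts = (q.bumpLargestPart hn).parts :=
    congrArg Nat.Partition.parts hpq
  have hsup : p.parts.sup = q.parts.sup := by
    simpa only [sup_parts_bumpLargestPart, Nat.add_right_cancel_iff] using congrArg Multiset.sup hparts
  rw [bumpLargestPart_parts, bumpLargestPart_parts, hsup, Multiset.cons_inj_right] at hparts
  ext1
  rw [← Multiset.cons_erase (p.sup_parts_mem hn), ← Multiset.cons_erase (q.sup_parts_mem hn),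
    hsup, hparts]

theorem forall_mem_parts_bumpLargestPart {A : Set ℕ} (hA : ∀ a ∈ A, a + 1 ∈ A)
    (hp : ∀ a ∈ p.parts, a ∈ A) : ∀ a ∈ (p.bumpLargestPart hn).parts, a ∈ A := by
  intro a ha
  rcases Multiset.mem_cons.mp ha with rfl | ha
  · exact hA _ (hp _ (p.sup_parts_mem hn))
  · exact hp _ (Multiset.mem_of_mem_erase ha)

theorem exists_count_sup_ge_two (n₀ : ℕ) (hn₀ : 0 < n₀) {m : ℕ} (hm : 3 * n₀ + 2 ≤ m) :
    ∃ q : m.Partition, (∀ a ∈ q.parts, n₀ ≤ a) ∧ 2 ≤ q.parts.count q.parts.sup := by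
  set c := n₀ + (m - n₀) % 2
  set a := (m - c) / 2
  have hca : c ≤ a := by omega
  have hparts : ∀ b ∈ a ::ₘ a ::ₘ {c}, n₀ ≤ b := by
    simp only [Multiset.mem_cons, Multiset.mem_singleton]
    omega
  have hsum : (a ::ₘ a ::ₘ {c}).sum = m := by
    simp only [Multiset.sum_cons, Multiset.sum_singleton]
    omega
  refine ⟨⟨a ::ₘ a ::ₘ {c}, fun hb => hn₀.trans_le (hparts _ hb), hsum⟩, hparts, ?_⟩
  simp [sup_eq_left.mpr hca]

end Nat.Partition

section

open Nat.Partition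

variable {A : Set ℕ} {n : ℕ}

noncomputable def bumpLargestPartIn (hA : ∀ a ∈ A, a + 1 ∈ A) (hn : 0 < n) :
    {p : n.Partition // ∀ a ∈ p.parts, a ∈ A} → {p : (n + 1).Partition // ∀ a ∈ p.parts, a ∈ A} :=
  Subtype.map (bumpLargestPart · hn) fun p => p.forall_mem_parts_bumpLargestPart hn hA

theorem bumpLargestPartIn_injective (hA : ∀ a ∈ A, a + 1 ∈ A) (hn : 0 < n) :
    Function.Injective (bumpLargestPartIn hA hn) :=
  Subtype.map_injective _ (bumpLargestPart_injective hn)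

theorem pA_le_pA_succ (hA : ∀ a ∈ A, a + 1 ∈ A) (hn : 0 < n) : pA A n ≤ pA A (n + 1) :=
  Nat.card_le_card_of_injective _ (bumpLargestPartIn_injective hA hn)

theorem pA_lt_pA_succ_of_count_sup (hA : ∀ a ∈ A, a + 1 ∈ A) (hn : 0 < n)
    (q : (n + 1).Partition) (hqA : ∀ a ∈ q.parts, a ∈ A) (hq : 2 ≤ q.parts.count q.parts.sup) :
    pA A n < pA A (n + 1) := by
  have hq_notMem : ⟨q, hqA⟩ ∉ Set.range (bumpLargestPartIn hA hn) := by
    rintro ⟨p, hp⟩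
    have := p.1.count_sup_parts_bumpLargestPart hn
    rw [show p.1.bumpLargestPart hn = q from congrArg Subtype.val hp] at this
    omega
  have := Fintype.ofFinite {p : n.Partition // ∀ a ∈ p.parts, a ∈ A}
  have := Fintype.ofFinite {p : (n + 1).Partition // ∀ a ∈ p.parts, a ∈ A}
  rw [pA, pA, Nat.card_eq_fintype_card, Nat.card_eq_fintype_card]
  exact Fintype.card_lt_of_injective_of_notMem _ (bumpLargestPartIn_injective hA hn) hq_notMem

end

theorem partition_tail_set_increasing (n₀ : ℕ) (hn₀ : 0 < n₀) :
    (∀ n : ℕ, 0 < n → pA {m : ℕ | n₀ ≤ m} n ≤ pA {m : ℕ | n₀ ≤ m} (n + 1)) ∧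
    (∀ n : ℕ, 3 * n₀ + 2 ≤ n → pA {m : ℕ | n₀ ≤ m} n < pA {m : ℕ | n₀ ≤ m} (n + 1)) := by
  have hA : ∀ a ∈ {m : ℕ | n₀ ≤ m}, a + 1 ∈ {m : ℕ | n₀ ≤ m} := fun a ha => Nat.le_succ_of_le ha
  refine ⟨fun n hn => pA_le_pA_succ hA hn, fun n hn => ?_⟩
  obtain ⟨q, hqA, hq⟩ := Nat.Partition.exists_count_sup_ge_two n₀ hn₀ (m := n + 1) (by omega)
  exact pA_lt_pA_succ_of_count_sup hA (by omega) q hqA hq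
end
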